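/- arXiv:2512.09414 — 5 statements merged into one kernel-verified Lean document; each statement's English description precedes it below -/
import Mathlib

section
/- Let K ⊆ M be a field extension, c ∈ K, and ψ : K → K a function such that ψ(x+y) = ψ(x) + ψ(y) + c·x·y for all x,y ∈ K. Then there exists Ψ : M → M extending ψ such that Ψ(x+y) = Ψ(x) + Ψ(y) + c·x·y for all x,y ∈ M. -/
/-- An injective linear map over a division ring admits an additive retraction. -/
lemma exists_addHom_retraction {R M N : Type*} [DivisionRing R] [AddCommGroup M]
    [AddCommGroup N] [Module R M] [Module R N] (f : M →ₗ[R] N)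
    (hf : Function.Injective f) : ∃ g : N →+ M, ∀ x, g (f x) = x := by
  obtain ⟨q, hq⟩ := Submodule.exists_isCompl (LinearMap.range f)
  let e := LinearEquiv.ofInjective f hf
  let proj := (LinearMap.range f).linearProjOfIsCompl q hq
  refine ⟨(e.symm.toLinearMap.comp proj).toAddMonoidHom, fun x => ?_⟩
  have h1 : proj (f x) = ⟨f x, LinearMap.mem_range_self f x⟩ :=
    Submodule.linearProjOfIsCompl_apply_left hq ⟨f x, LinearMap.mem_range_self f x⟩
  simp only [LinearMap.toAddMonoidHom_coe, LinearMap.coe_comp, Function.comp_apply,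
    LinearEquiv.coe_coe, h1]
  exact e.symm_apply_eq.mpr rfl

/-- There is an additive retraction of `algebraMap K M` for a field extension. -/
lemma exists_algebraMap_retraction (K M : Type*) [Field K] [Field M] [Algebra K M] :
    ∃ π : M →+ K, ∀ k, π (algebraMap K M k) = k := by
  obtain ⟨p, hp⟩ := CharP.exists M
  rcases CharP.char_is_prime_or_zero M p with hprime | h0
  · -- positive characteristic
    haveI : Fact p.Prime := ⟨hprime⟩
    haveI : CharP K p := (algebraMap K M).charP_iff (algebraMap K M).injective p |>.mpr hp
    haveI : NeZero p := ⟨hprime.ne_zero⟩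
    letI : Module (ZMod p) K := AddCommGroup.zmodModule (by
      intro x
      have : (p : K) = 0 := CharP.cast_eq_zero K p
      simp [nsmul_eq_mul, this])
    letI : Module (ZMod p) M := AddCommGroup.zmodModule (by
      intro x
      have : (p : M) = 0 := CharP.cast_eq_zero M p
      simp [nsmul_eq_mul, this])
    exact exists_addHom_retraction
      ((algebraMap K M).toAddMonoidHom.toZModLinearMap p)
      (algebraMap K M).injective
  · -- characteristic zero
    subst h0
    haveI : CharZero M := CharP.charP_to_charZero M
    haveI : CharZero K := by
      constructor
      intro a b hab
      exact Nat.cast_injective (R := M) (by simpa using congrArg (algebraMap K M) hab)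
    exact exists_addHom_retraction
      ((algebraMap K M).toAddMonoidHom.toRatLinearMap)
      (algebraMap K M).injective

/-- Let `K ⊆ M` be a field extension, `c ∈ K` and `ψ : K → K` a function such that
`ψ(x+y) = ψ x + ψ y + c*x*y` for all `x, y ∈ K`.  Then `ψ` extends to `Ψ : M → M`
satisfying `Ψ(x+y) = Ψ x + Ψ y + c*x*y` for all `x, y ∈ M`. -/
theorem psi_extend {K M : Type*} [Field K] [Field M] [Algebra K M]
    (c : K) (ψ : K → K)
    (h : ∀ x y : K, ψ (x + y) = ψ x + ψ y + c * x * y) :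
    ∃ Ψ : M → M,
      (∀ k : K, Ψ (algebraMap K M k) = algebraMap K M (ψ k)) ∧
      ∀ x y : M, Ψ (x + y) = Ψ x + Ψ y + algebraMap K M c * x * y := by
  obtain ⟨π, hπ⟩ := exists_algebraMap_retraction K M
  set ι := algebraMap K M with hι
  have hψ0 : ψ 0 = 0 := by have := h 0 0; simpa using this.symm
  by_cases h2 : (2 : K) = 0
  · -- characteristic two: c = 0 and ψ is additive
    have hc : c = 0 := by
      have h1 := h 1 1
      have h11 : (1 : K) + 1 = 0 := by linear_combination h2
      rw [h11, hψ0] at h1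
      linear_combination -h1 - ψ 1 * h2
    subst hc
    refine ⟨fun x => ι (ψ (π x)), fun k => ?_, fun x y => ?_⟩
    · dsimp only; rw [hπ]
    · dsimp only
      rw [map_add π x y, h (π x) (π y)]
      simp
  · -- characteristic not two
    set φ : K → K := fun k => ψ k - c / 2 * k ^ 2 with hφ
    have hφadd : ∀ a b, φ (a + b) = φ a + φ b := by
      intro a b
      simp only [hφ, h a b]
      field_simp
      ring
    refine ⟨fun x => ι (φ (π x)) + ι (c / 2) * x * x, fun k => ?_, fun x y => ?_⟩
    · dsimp only
      rw [hπ, ← map_mul, ← map_mul, ← map_add]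
      congr 1
      simp only [hφ]
      field_simp
      ring
    · dsimp only
      rw [map_add π x y, hφadd, map_add ι]
      have hc2 : ι c = ι (c / 2) + ι (c / 2) := by
        rw [← map_add]; congr 1; field_simp; ring
      rw [hc2]; ring
end

section
/- Let K ⊆ M be fields of characteristic ≠ 2, L a K-linear complement of K in M (so M = K ⊕ L), c ∈ K, and ψ : K → K with ψ(x+y)=ψ(x)+ψ(y)+cxy on K. Define Ψ(k+l) := ψ(k) + (c/2)·l² + c·k·l for k ∈ K, l ∈ L. Then Ψ(x+y) = Ψ(x) + Ψ(y) + c·x·y for all x,y ∈ M. -/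
/-- Let `K ⊆ M` be fields of characteristic `≠ 2`, `L` a `K`-linear complement of `K`
in `M` (so `M = K ⊕ L`), `c ∈ K`, and `ψ : K → K` with `ψ(x+y) = ψ x + ψ y + c*x*y`
on `K`.  If `Ψ : M → M` satisfies `Ψ(k + l) = ψ k + (c/2)*l² + c*k*l` for `k ∈ K`,
`l ∈ L`, then `Ψ(x+y) = Ψ x + Ψ y + c*x*y` for all `x, y ∈ M`. -/
theorem psi_extend_formula {K M : Type*} [Field K] [Field M] [Algebra K M]
    (h2 : (2 : K) ≠ 0)
    (L : Submodule K M)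
    (hL : IsCompl (LinearMap.range (Algebra.linearMap K M)) L)
    (c : K) (ψ : K → K)
    (h : ∀ x y : K, ψ (x + y) = ψ x + ψ y + c * x * y)
    (Ψ : M → M)
    (hΨ : ∀ (k : K) (l : M), l ∈ L →
      Ψ (algebraMap K M k + l) =
        algebraMap K M (ψ k) + (algebraMap K M c / 2) * l ^ 2 +
          algebraMap K M c * algebraMap K M k * l) :
    ∀ x y : M, Ψ (x + y) = Ψ x + Ψ y + algebraMap K M c * x * y := by
  have h2M : (2 : M) ≠ 0 := by
    intro hh
    apply h2
    apply (algebraMap K M).injective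
    rw [map_ofNat, hh, map_zero]
  have decomp : ∀ x : M, ∃ k : K, ∃ l ∈ L, x = algebraMap K M k + l := by
    intro x
    have hx : x ∈ (LinearMap.range (Algebra.linearMap K M)) ⊔ L := by
      rw [hL.sup_eq_top]; trivial
    obtain ⟨a, ⟨k, hk⟩, b, hb, hab⟩ := Submodule.mem_sup.mp hx
    exact ⟨k, b, hb, by simp at hk; rw [← hab, hk]⟩
  intro x y
  obtain ⟨k₁, l₁, hl₁, rfl⟩ := decomp x
  obtain ⟨k₂, l₂, hl₂, rfl⟩ := decomp y
  have key : algebraMap K M k₁ + l₁ + (algebraMap K M k₂ + l₂)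
      = algebraMap K M (k₁ + k₂) + (l₁ + l₂) := by
    rw [map_add]; ring
  rw [key, hΨ _ _ (L.add_mem hl₁ hl₂), hΨ _ _ hl₁, hΨ _ _ hl₂, h, map_add, map_add,
    map_mul, map_mul, map_add]
  field_simp
  ring
end

section
/- Let K and M be fields and Ψ : H(K) → H(M) a group monomorphism, where M is algebraically closed (or more generally such that Ψ maps the center of H(K) into the center of H(M)). Writing Ψ(x,0,0) = (f₁(x), g₁(x), i₁(x)), Ψ(0,y,0) = (f₂(y), g₂(y), i₂(y)), and Ψ(0,0,z) = (0,0,i(z)), one has i(xy) = f₁(x)g₂(y) − f₂(y)g₁(x) for all x,y ∈ K. -/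
/-- The Heisenberg group over a field `K`: upper unitriangular 3×3 matrices,
encoded by their entries `a` in position (1,2), `b` in position (2,3), `c` in position (1,3). -/
@[ext]
structure Heisenberg (K : Type*) [Field K] where
  a : K
  b : K
  c : K

namespace Heisenberg

variable {K : Type*} [Field K]

/-- The corresponding upper unitriangular matrix. -/
def toMatrix (x : Heisenberg K) : Matrix (Fin 3) (Fin 3) K :=
  !![1, x.a, x.c; 0, 1, x.b; 0, 0, 1]

instance : Mul (Heisenberg K) :=
  ⟨fun x y => ⟨x.a + y.a, x.b + y.b, x.c + y.c + x.a * y.b⟩⟩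
instance : One (Heisenberg K) := ⟨⟨0, 0, 0⟩⟩
instance : Inv (Heisenberg K) :=
  ⟨fun x => ⟨-x.a, -x.b, -x.c + x.a * x.b⟩⟩

@[simp] lemma mul_a (x y : Heisenberg K) : (x * y).a = x.a + y.a := rfl
@[simp] lemma mul_b (x y : Heisenberg K) : (x * y).b = x.b + y.b := rfl
@[simp] lemma mul_c (x y : Heisenberg K) : (x * y).c = x.c + y.c + x.a * y.b := rfl
@[simp] lemma one_a : (1 : Heisenberg K).a = 0 := rfl
@[simp] lemma one_b : (1 : Heisenberg K).b = 0 := rfl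
@[simp] lemma one_c : (1 : Heisenberg K).c = 0 := rfl
@[simp] lemma inv_a (x : Heisenberg K) : (x⁻¹).a = -x.a := rfl
@[simp] lemma inv_b (x : Heisenberg K) : (x⁻¹).b = -x.b := rfl
@[simp] lemma inv_c (x : Heisenberg K) : (x⁻¹).c = -x.c + x.a * x.b := rfl

instance : Group (Heisenberg K) where
  mul_assoc x y z := by ext <;> simp <;> ring
  one_mul x := by ext <;> simp
  mul_one x := by ext <;> simp
  inv_mul_cancel x := by ext <;> simp

lemma toMatrix_mul (x y : Heisenberg K) :
    (x * y).toMatrix = x.toMatrix * y.toMatrix := by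
  simp only [toMatrix, Matrix.mul_fin_three]
  norm_num
  refine ⟨⟨?_, ?_⟩, ?_⟩ <;> ring

end Heisenberg

open scoped commutatorElement

namespace Heisenberg

variable {K : Type*} [Field K]

theorem commutatorElement_eq (g h : Heisenberg K) :
    ⁅g, h⁆ = ⟨0, 0, g.a * h.b - h.a * g.b⟩ := by
  ext <;> simp [commutatorElement_def]
  ring

end Heisenberg

theorem heisenberg_mono_center_formula_general {K M : Type*} [Field K] [Field M]
    (Ψ : Heisenberg K → Heisenberg M)
    (hmul : ∀ g h : Heisenberg K, Ψ (g * h) = Ψ g * Ψ h)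
    (f₁ g₁ i₁ f₂ g₂ i₂ i : K → M)
    (h1 : ∀ x : K, Ψ ⟨x, 0, 0⟩ = (⟨f₁ x, g₁ x, i₁ x⟩ : Heisenberg M))
    (h2 : ∀ y : K, Ψ ⟨0, y, 0⟩ = (⟨f₂ y, g₂ y, i₂ y⟩ : Heisenberg M))
    (hz : ∀ z : K, Ψ ⟨0, 0, z⟩ = (⟨0, 0, i z⟩ : Heisenberg M)) :
    ∀ x y : K, i (x * y) = f₁ x * g₂ y - f₂ y * g₁ x := by
  intro x y
  have hcomm := map_commutatorElement (MonoidHom.mk' Ψ hmul) ⟨x, 0, 0⟩ ⟨0, y, 0⟩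
  simp only [MonoidHom.mk'_apply, Heisenberg.commutatorElement_eq, h1, h2, mul_zero, sub_zero,
    hz] at hcomm
  exact congrArg Heisenberg.c hcomm

/-- Let `Ψ : H(K) → H(M)` be a group monomorphism mapping the center of `H(K)` into
the center of `H(M)`, with component functions
`Ψ(x,0,0) = (f₁ x, g₁ x, i₁ x)`, `Ψ(0,y,0) = (f₂ y, g₂ y, i₂ y)`,
`Ψ(0,0,z) = (0, 0, i z)`.  Then `i (x*y) = f₁ x * g₂ y - f₂ y * g₁ x`. -/
theorem heisenberg_mono_center_formula {K M : Type*} [Field K] [Field M]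
    (Ψ : Heisenberg K → Heisenberg M)
    (hmul : ∀ g h : Heisenberg K, Ψ (g * h) = Ψ g * Ψ h)
    (hinj : Function.Injective Ψ)
    (f₁ g₁ i₁ f₂ g₂ i₂ i : K → M)
    (h1 : ∀ x : K, Ψ ⟨x, 0, 0⟩ = (⟨f₁ x, g₁ x, i₁ x⟩ : Heisenberg M))
    (h2 : ∀ y : K, Ψ ⟨0, y, 0⟩ = (⟨f₂ y, g₂ y, i₂ y⟩ : Heisenberg M))
    (hz : ∀ z : K, Ψ ⟨0, 0, z⟩ = (⟨0, 0, i z⟩ : Heisenberg M)) :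
    ∀ x y : K, i (x * y) = f₁ x * g₂ y - f₂ y * g₁ x :=
  heisenberg_mono_center_formula_general Ψ hmul f₁ g₁ i₁ f₂ g₂ i₂ i h1 h2 hz
end

section
/- Let K, M be fields and Ψ : H(K) → H(M) a group homomorphism mapping the center of H(K) into the center of H(M), with component functions as above (Ψ(x,0,0) = (f₁(x),g₁(x),i₁(x)), Ψ(0,y,0) = (f₂(y),g₂(y),i₂(y)), Ψ(0,0,z) = (0,0,i(z))). Then f₁(x)g₁(y) = f₁(y)g₁(x) and f₂(x)g₂(y) = f₂(y)g₂(x) for all x,y ∈ K. -/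
namespace Heisenberg

variable {K : Type*} [Field K]

theorem commute_iff {p q : Heisenberg K} : Commute p q ↔ p.a * q.b = q.a * p.b := by
  simp only [Commute, SemiconjBy, Heisenberg.ext_iff, mul_a, mul_b, mul_c]
  constructor
  · rintro ⟨-, -, hc⟩
    linear_combination hc
  · intro h
    refine ⟨add_comm _ _, add_comm _ _, ?_⟩
    linear_combination h

end Heisenberg

theorem heisenberg_hom_symmetry_general {K M : Type*} [Field K] [Field M]
    (Ψ : Heisenberg K → Heisenberg M)
    (hmul : ∀ g h : Heisenberg K, Ψ (g * h) = Ψ g * Ψ h)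
    (f₁ g₁ i₁ f₂ g₂ i₂ : K → M)
    (h1 : ∀ x : K, Ψ ⟨x, 0, 0⟩ = (⟨f₁ x, g₁ x, i₁ x⟩ : Heisenberg M))
    (h2 : ∀ y : K, Ψ ⟨0, y, 0⟩ = (⟨f₂ y, g₂ y, i₂ y⟩ : Heisenberg M)) :
    (∀ x y : K, f₁ x * g₁ y = f₁ y * g₁ x) ∧
    (∀ x y : K, f₂ x * g₂ y = f₂ y * g₂ x) := by
  have map_commute {p q : Heisenberg K} (h : p.a * q.b = q.a * p.b) :
      (Ψ p).a * (Ψ q).b = (Ψ q).a * (Ψ p).b :=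
    Heisenberg.commute_iff.1 ((Heisenberg.commute_iff.2 h).map (MonoidHom.mk' Ψ hmul))
  constructor
  · intro x y
    simpa only [h1] using map_commute (p := ⟨x, 0, 0⟩) (q := ⟨y, 0, 0⟩) (by simp)
  · intro x y
    simpa only [h2] using map_commute (p := ⟨0, x, 0⟩) (q := ⟨0, y, 0⟩) (by simp)

/-- Let `Ψ : H(K) → H(M)` be a group homomorphism mapping the center of `H(K)` into
the center of `H(M)`, with component functions as in the paper.  Then
`f₁ x * g₁ y = f₁ y * g₁ x` and `f₂ x * g₂ y = f₂ y * g₂ x` for all `x, y ∈ K`. -/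
theorem heisenberg_hom_symmetry {K M : Type*} [Field K] [Field M]
    (Ψ : Heisenberg K → Heisenberg M)
    (hmul : ∀ g h : Heisenberg K, Ψ (g * h) = Ψ g * Ψ h)
    (f₁ g₁ i₁ f₂ g₂ i₂ i : K → M)
    (h1 : ∀ x : K, Ψ ⟨x, 0, 0⟩ = (⟨f₁ x, g₁ x, i₁ x⟩ : Heisenberg M))
    (h2 : ∀ y : K, Ψ ⟨0, y, 0⟩ = (⟨f₂ y, g₂ y, i₂ y⟩ : Heisenberg M))
    (hz : ∀ z : K, Ψ ⟨0, 0, z⟩ = (⟨0, 0, i z⟩ : Heisenberg M)) :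
    (∀ x y : K, f₁ x * g₁ y = f₁ y * g₁ x) ∧
    (∀ x y : K, f₂ x * g₂ y = f₂ y * g₂ x) :=
  heisenberg_hom_symmetry_general Ψ hmul f₁ g₁ i₁ f₂ g₂ i₂ h1 h2
end

section
/- Let K, M be fields and Ψ : H(K) → H(M) a group monomorphism mapping the center into the center, with component functions f₁,g₁,f₂,g₂,i as above. Set d := i(1) = f₁(1)g₂(1) − f₂(1)g₁(1). Then d ≠ 0 and the map θ := d⁻¹·i : K → M is a field homomorphism (it satisfies θ(1) = 1, θ(x+y) = θ(x)+θ(y), and θ(xy) = θ(x)θ(y)). -/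
/-
Ψ restricts to an injective additive map `i` on the centres, and the commutator of `(x,0,0)` and
`(0,y,0)` is the central element `(0,0,xy)`.  Applying Ψ gives `i(xy) = det(u x, v y)` with
`u x = (f₁ x, g₁ x)` and `v y = (f₂ y, g₂ y)`.  The elements `(x,0,0)` commute, so all `u x` are
parallel, and the Plücker relation `det(u 1, v 1) det(u x, v y) - det(u x, v 1) det(u 1, v y)
= det(u 1, u x) det(v 1, v y)` becomes `i 1 · i(xy) = i x · i y`.
-/

namespace Heisenberg

variable {K M : Type*} [Field K] [Field M]

def central (z : K) : Heisenberg K := ⟨0, 0, z⟩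

lemma central_injective : Function.Injective (central : K → Heisenberg K) :=
  fun _ _ h => congrArg c h

@[simp] lemma central_zero : central (0 : K) = 1 := rfl

lemma central_add (z w : K) : central (z + w) = central z * central w := by
  ext <;> simp [central]

/-- The `c`-entry of the commutator `g h g⁻¹ h⁻¹`. -/
def commutatorCoeff (g h : Heisenberg K) : K := g.a * h.b - h.a * g.b

lemma mul_eq_central_mul_mul_swap (g h : Heisenberg K) :
    g * h = central (commutatorCoeff g h) * (h * g) := by
  ext <;> simp [central, commutatorCoeff] <;> ring

lemma commute_iff_s18 {g h : Heisenberg K} : Commute g h ↔ commutatorCoeff g h = 0 := by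
  rw [Commute, SemiconjBy, mul_eq_central_mul_mul_swap g h, mul_eq_right, ← central_zero,
    central_injective.eq_iff]

section CentralMap

variable (φ : Heisenberg K →* Heisenberg M) {i : K → M}

lemma map_zero_of_map_central (hφ : ∀ z, φ (central z) = central (i z)) : i 0 = 0 :=
  central_injective <| by rw [← hφ, central_zero, map_one, central_zero]

lemma map_add_of_map_central (hφ : ∀ z, φ (central z) = central (i z)) (z w : K) :
    i (z + w) = i z + i w :=
  central_injective <| by rw [central_add, ← hφ, ← hφ, ← hφ, central_add, map_mul]

lemma map_ne_zero_of_map_central (hφ : ∀ z, φ (central z) = central (i z))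
    (hinj : Function.Injective φ) {z : K} (hz : z ≠ 0) : i z ≠ 0 := fun h =>
  hz <| central_injective <| hinj <| by rw [hφ, h, hφ, map_zero_of_map_central φ hφ]

lemma map_commutatorCoeff (hφ : ∀ z, φ (central z) = central (i z)) (g h : Heisenberg K) :
    i (commutatorCoeff g h) = commutatorCoeff (φ g) (φ h) := by
  apply central_injective
  have h := congrArg φ (mul_eq_central_mul_mul_swap g h)
  rw [map_mul, map_mul, map_mul, hφ, mul_eq_central_mul_mul_swap (φ g)] at h
  exact (mul_right_cancel h).symm

lemma map_mul_eq_commutatorCoeff (hφ : ∀ z, φ (central z) = central (i z)) (x y : K) :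
    i (x * y) = commutatorCoeff (φ ⟨x, 0, 0⟩) (φ ⟨0, y, 0⟩) := by
  rw [← map_commutatorCoeff φ hφ]
  simp [commutatorCoeff]

lemma map_one_mul_map_mul (hφ : ∀ z, φ (central z) = central (i z)) (x y : K) :
    i 1 * i (x * y) = i x * i y := by
  have hu : commutatorCoeff (φ ⟨x, 0, 0⟩) (φ ⟨1, 0, 0⟩) = 0 :=
    commute_iff_s18.1 <| (commute_iff_s18.2 <| by simp [commutatorCoeff]).map φ
  have h11 := map_mul_eq_commutatorCoeff φ hφ 1 1
  have hx1 := map_mul_eq_commutatorCoeff φ hφ x 1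
  have h1y := map_mul_eq_commutatorCoeff φ hφ 1 y
  rw [mul_one] at h11 hx1
  rw [one_mul] at h1y
  rw [h11, hx1, h1y, map_mul_eq_commutatorCoeff φ hφ x y]
  simp only [commutatorCoeff] at hu ⊢
  linear_combination
    ((φ ⟨0, 1, 0⟩).b * (φ ⟨0, y, 0⟩).a - (φ ⟨0, 1, 0⟩).a * (φ ⟨0, y, 0⟩).b) * hu

def normalizedCentralHom (hφ : ∀ z, φ (central z) = central (i z))
    (hinj : Function.Injective φ) : K →+* M where
  toFun x := (i 1)⁻¹ * i x
  map_one' := inv_mul_cancel₀ (map_ne_zero_of_map_central φ hφ hinj one_ne_zero)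
  map_zero' := by rw [map_zero_of_map_central φ hφ, mul_zero]
  map_add' x y := by rw [map_add_of_map_central φ hφ, mul_add]
  map_mul' x y := by
    have := map_ne_zero_of_map_central φ hφ hinj (one_ne_zero (α := K))
    field_simp
    linear_combination map_one_mul_map_mul φ hφ x y

end CentralMap

end Heisenberg

open Heisenberg in
/-- Let `Ψ : H(K) → H(M)` be a group monomorphism mapping the center into the center,
with component functions as in the paper, and set `d := i 1`.  Then
`d = f₁ 1 * g₂ 1 - f₂ 1 * g₁ 1 ≠ 0` and `θ := d⁻¹ • i` is a field homomorphism. -/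
theorem heisenberg_mono_field_hom {K M : Type*} [Field K] [Field M]
    (Ψ : Heisenberg K → Heisenberg M)
    (hmul : ∀ g h : Heisenberg K, Ψ (g * h) = Ψ g * Ψ h)
    (hinj : Function.Injective Ψ)
    (f₁ g₁ i₁ f₂ g₂ i₂ i : K → M)
    (h1 : ∀ x : K, Ψ ⟨x, 0, 0⟩ = (⟨f₁ x, g₁ x, i₁ x⟩ : Heisenberg M))
    (h2 : ∀ y : K, Ψ ⟨0, y, 0⟩ = (⟨f₂ y, g₂ y, i₂ y⟩ : Heisenberg M))
    (hz : ∀ z : K, Ψ ⟨0, 0, z⟩ = (⟨0, 0, i z⟩ : Heisenberg M)) :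
    i 1 ≠ 0 ∧
    i 1 = f₁ 1 * g₂ 1 - f₂ 1 * g₁ 1 ∧
    (fun x : K => (i 1)⁻¹ * i x) 1 = 1 ∧
    (∀ x y : K, (fun x : K => (i 1)⁻¹ * i x) (x + y) =
        (fun x : K => (i 1)⁻¹ * i x) x + (fun x : K => (i 1)⁻¹ * i x) y) ∧
    (∀ x y : K, (fun x : K => (i 1)⁻¹ * i x) (x * y) =
        (fun x : K => (i 1)⁻¹ * i x) x * (fun x : K => (i 1)⁻¹ * i x) y) := by
  let φ := MonoidHom.mk' Ψ hmul
  have hφ : ∀ z, φ (central z) = central (i z) := hz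
  have hdet : i 1 = f₁ 1 * g₂ 1 - f₂ 1 * g₁ 1 := by
    simpa [φ, h1, h2, commutatorCoeff] using map_mul_eq_commutatorCoeff φ hφ 1 1
  let θ := normalizedCentralHom φ hφ hinj
  exact ⟨map_ne_zero_of_map_central φ hφ hinj one_ne_zero, hdet,
    θ.map_one, θ.map_add, θ.map_mul⟩
end
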